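/- arXiv:2311.17346 — 5 statements merged into one kernel-verified Lean document; each statement's English description precedes it below -/
import Mathlib

section
/- Let N ≤ L and let x = (x_1 < x_2 < ... < x_N) and y = (y_1 < y_2 < ... < y_N) be two strictly increasing N-tuples of positions in {1,...,L} (configurations of N exclusion particles). Then there exists an index i (a 'flexible particle') such that the closed interval between x_i and y_i contains no position x_j with j ≠ i. -/
/-! The rightmost particle `i` with `x i ≤ y i` is flexible: a particle `j > i` lying in
`[x i, y i]` would satisfy `x j ≤ y i ≤ y j`. If there is no such particle, reversing both orders
reduces to the same argument. -/

namespace Paper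

/-- There is a path of exactly `n` moves of `step` from `x` to `y`. -/
def Reaches {C : Type*} (step : C → C → Prop) (x y : C) (n : ℕ) : Prop :=
  ∃ f : ℕ → C, f 0 = x ∧ f n = y ∧ ∀ i < n, step (f i) (f (i + 1))

/-- Graph distance: minimal number of moves from `x` to `y`. -/
noncomputable def gdist {C : Type*} (step : C → C → Prop) (x y : C) : ℕ :=
  sInf {n | Reaches step x y n}

section Flexible

open OrderDual

variable {ι α : Type*}

def IsFlexible [Lattice α] (x y : ι → α) (i : ι) : Prop :=
  ∀ j ≠ i, x j ∉ Set.uIcc (x i) (y i)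

theorem isFlexible_dual_iff [Lattice α] {x y : ι → α} {i : ι} :
    IsFlexible (toDual ∘ x ∘ ofDual) (toDual ∘ y ∘ ofDual) (toDual i) ↔ IsFlexible x y i := by
  simp only [IsFlexible, Function.comp_apply, Set.uIcc_toDual, Set.mem_preimage, ofDual_toDual]
  exact ⟨fun h j hj => h (toDual j) hj, fun h j hj => h (ofDual j) hj⟩

variable [LinearOrder ι] [Fintype ι] [LinearOrder α] {x y : ι → α}

theorem exists_isFlexible_of_le (hx : StrictMono x) (hy : Monotone y) {i₀ : ι}
    (h₀ : x i₀ ≤ y i₀) : ∃ i, IsFlexible x y i := by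
  classical
  obtain ⟨i, hi, hmax⟩ := (Finset.univ.filter fun i => x i ≤ y i).exists_max_image id
    ⟨i₀, by simpa using h₀⟩
  have hxy : x i ≤ y i := (Finset.mem_filter.1 hi).2
  refine ⟨i, fun j hj hmem => ?_⟩
  rw [Set.uIcc_of_le hxy] at hmem
  rcases hj.lt_or_gt with hji | hij
  · exact (hx hji).not_ge hmem.1
  · have hj : x j ≤ y j := hmem.2.trans (hy hij.le)
    exact (hmax j (by simpa using hj)).not_gt hij

theorem exists_isFlexible_of_ge (hx : StrictMono x) (hy : Monotone y) {i₀ : ι}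
    (h₀ : y i₀ ≤ x i₀) : ∃ i, IsFlexible x y i := by
  obtain ⟨i, hi⟩ := exists_isFlexible_of_le (ι := ιᵒᵈ) (α := αᵒᵈ) hx.dual hy.dual
    (i₀ := toDual i₀) h₀
  exact ⟨ofDual i, isFlexible_dual_iff.1 hi⟩

theorem exists_isFlexible [Nonempty ι] (hx : StrictMono x) (hy : Monotone y) :
    ∃ i, IsFlexible x y i := by
  let i₀ : ι := Classical.arbitrary ι
  rcases le_total (x i₀) (y i₀) with h₀ | h₀
  · exact exists_isFlexible_of_le hx hy h₀
  · exact exists_isFlexible_of_ge hx hy h₀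

end Flexible

theorem exists_flexible_particle_general (N : ℕ) (hN : 0 < N)
    (x y : Fin N → ℤ)
    (hx : StrictMono x)
    (hy : StrictMono y) :
    ∃ i : Fin N, ∀ j : Fin N, j ≠ i →
      x j ∉ Set.Icc (min (x i) (y i)) (max (x i) (y i)) :=
  have : Nonempty (Fin N) := ⟨⟨0, hN⟩⟩
  exists_isFlexible hx hy.monotone

/-- existence of a flexible particle. -/
theorem exists_flexible_particle (N L : ℕ) (hN : 0 < N) (hNL : N ≤ L)
    (x y : Fin N → ℤ)
    (hx : StrictMono x) (hxb : ∀ i, 1 ≤ x i ∧ x i ≤ (L : ℤ))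
    (hy : StrictMono y) (hyb : ∀ i, 1 ≤ y i ∧ y i ≤ (L : ℤ)) :
    ∃ i : Fin N, ∀ j : Fin N, j ≠ i →
      x j ∉ Set.Icc (min (x i) (y i)) (max (x i) (y i)) :=
  exists_flexible_particle_general N hN x y hx hy

end Paper
end

section
/- Let x and y be two N-element subsets of Z/LZ. Then there exists a cyclic (periodic) interval [a,b] of length ⌊L/2⌋ or ⌊L/2⌋+1 that contains the same number of elements of x as of y. -/
/-!
Let `D(a)` be the number of points of `x` minus the number of points of `y` in the interval of
length `m = ⌊L/2⌋` starting at `a`. Every site lies in exactly `m` of these intervals, so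
`∑ₐ D(a) = (|x| - |y|) m = 0`. Either some `D(a)` vanishes, or `D` changes sign around the cycle:
`D(a) > 0 > D(a + 1)` for some `a`. The interval of length `m + 1` starting at `a` is obtained
both by adding one site to the interval at `a` and by adding one site to the interval at `a + 1`,
so its discrepancy is at least `D(a) - 1 ≥ 0` and at most `D(a + 1) + 1 ≤ 0`.
-/

namespace Paper

/-- The cyclic (periodic) interval of length `m` starting at `a` in `ℤ/Lℤ`. -/
def cycInt (L : ℕ) (a : ZMod L) (m : ℕ) : Finset (ZMod L) :=
  (Finset.range m).image fun j : ℕ => a + (j : ZMod L)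

open Finset

theorem _root_.Finset.card_inter_insert_of_notMem {α : Type*} [DecidableEq α]
    {s t : Finset α} {p : α} (hp : p ∉ t) : #(s ∩ insert p t) = #(s ∩ t) + if p ∈ s then 1 else 0 := by
  split_ifs with h
  · rw [inter_insert_of_mem h, card_insert_of_notMem fun h' => hp (mem_inter.1 h').2]
  · rw [inter_insert_of_notMem h, add_zero]

namespace ZMod

variable {L : ℕ} [NeZero L]

theorem card_filter_val_lt {m : ℕ} (hm : m ≤ L) : #{d : ZMod L | d.val < m} = m := by
  obtain ⟨n, rfl⟩ := Nat.exists_eq_succ_of_ne_zero (NeZero.ne L)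
  exact Fin.card_filter_val_lt.trans (min_eq_right hm)

theorem forall_of_succ {p : ZMod L → Prop} {a : ZMod L} (ha : p a)
    (hsucc : ∀ b, p b → p (b + 1)) (b : ZMod L) : p b := by
  have h : ∀ n : ℕ, p (a + n) := by
    intro n
    induction n with
    | zero => simpa using ha
    | succ n ih => simpa [add_assoc] using hsucc _ ih
  simpa using h (b - a).val

theorem exists_pos_and_succ_neg {f : ZMod L → ℤ} (hsum : ∑ a, f a = 0) (hf : ∀ a, f a ≠ 0) :
    ∃ a, 0 < f a ∧ f (a + 1) < 0 := by
  obtain ⟨a, -, ha⟩ :=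
    exists_pos_of_sum_zero_of_exists_nonzero f hsum ⟨0, mem_univ _, hf 0⟩
  by_contra! hsucc
  have hpos : ∀ b, 0 < f b :=
    forall_of_succ ha fun b hb => (hsucc b hb).lt_of_ne (hf (b + 1)).symm
  exact (sum_pos (fun b _ => hpos b) univ_nonempty).ne' hsum

end ZMod

section Intervals

variable {L : ℕ}

theorem mem_cycInt_iff_val_sub_lt [NeZero L] {a p : ZMod L} {m : ℕ} :
    p ∈ cycInt L a m ↔ (p - a).val < m := by
  simp only [cycInt, mem_image, mem_range]
  constructor
  · rintro ⟨j, hj, rfl⟩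
    rw [add_sub_cancel_left, ZMod.val_natCast]
    exact (Nat.mod_le j L).trans_lt hj
  · exact fun h => ⟨_, h, by rw [ZMod.natCast_zmod_val, add_sub_cancel]⟩

theorem card_filter_mem_cycInt [NeZero L] (p : ZMod L) {m : ℕ} (hm : m ≤ L) :
    #{a : ZMod L | p ∈ cycInt L a m} = m := by
  simp_rw [mem_cycInt_iff_val_sub_lt]
  exact (card_equiv (Equiv.subLeft p) (by simp)).trans (ZMod.card_filter_val_lt hm)

theorem sum_card_inter_cycInt [NeZero L] (S : Finset (ZMod L)) {m : ℕ} (hm : m ≤ L) :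
    ∑ a : ZMod L, #(S ∩ cycInt L a m) = #S * m := by
  simp_rw [← filter_mem_eq_inter, card_filter]
  rw [sum_comm]
  simp_rw [← card_filter, card_filter_mem_cycInt _ hm, sum_const, smul_eq_mul]

theorem cycInt_succ (a : ZMod L) (m : ℕ) :
    cycInt L a (m + 1) = insert (a + m) (cycInt L a m) := by
  simp [cycInt, range_add_one]

theorem cycInt_succ' (a : ZMod L) (m : ℕ) :
    cycInt L a (m + 1) = insert a (cycInt L (a + 1) m) := by
  simp only [cycInt, range_add_one', image_insert, map_eq_image, image_image, Nat.cast_zero,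
    add_zero]
  congr 2
  ext j
  change a + ((j + 1 : ℕ) : ZMod L) = a + 1 + j
  push_cast
  ring

theorem add_notMem_cycInt [NeZero L] {m : ℕ} (hm : m < L) (a : ZMod L) :
    a + m ∉ cycInt L a m := by
  rw [mem_cycInt_iff_val_sub_lt, add_sub_cancel_left, ZMod.val_natCast_of_lt hm]
  exact lt_irrefl m

theorem notMem_cycInt_add_one [NeZero L] {m : ℕ} (hm : m < L) (a : ZMod L) :
    a ∉ cycInt L (a + 1) m := by
  obtain ⟨n, rfl⟩ := Nat.exists_eq_succ_of_ne_zero (NeZero.ne L)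
  rw [mem_cycInt_iff_val_sub_lt, sub_add_cancel_left, ZMod.val_neg_one]
  omega

end Intervals

def discrepancy {L : ℕ} (x y : Finset (ZMod L)) (a : ZMod L) (m : ℕ) : ℤ :=
  #(x ∩ cycInt L a m) - #(y ∩ cycInt L a m)

section Discrepancy

variable {L : ℕ} [NeZero L] (x y : Finset (ZMod L))

theorem sum_discrepancy {m : ℕ} (hm : m ≤ L) (hxy : #x = #y) :
    ∑ a, discrepancy x y a m = 0 := by
  simp only [discrepancy, sum_sub_distrib]
  rw [← Nat.cast_sum, ← Nat.cast_sum, sum_card_inter_cycInt x hm, sum_card_inter_cycInt y hm, hxy,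
    sub_self]

theorem discrepancy_succ {m : ℕ} (hm : m < L) (a : ZMod L) :
    discrepancy x y a (m + 1) = discrepancy x y a m +
      ((if a + m ∈ x then 1 else 0) - if a + m ∈ y then 1 else 0) := by
  simp only [discrepancy, cycInt_succ,
    card_inter_insert_of_notMem (add_notMem_cycInt hm a)]
  push_cast
  ring

theorem discrepancy_succ' {m : ℕ} (hm : m < L) (a : ZMod L) :
    discrepancy x y a (m + 1) = discrepancy x y (a + 1) m +
      ((if a ∈ x then 1 else 0) - if a ∈ y then 1 else 0) := by
  simp only [discrepancy, cycInt_succ',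
    card_inter_insert_of_notMem (notMem_cycInt_add_one hm a)]
  push_cast
  ring

theorem discrepancy_succ_eq_zero {m : ℕ} (hm : m < L) {a : ZMod L}
    (hpos : 0 < discrepancy x y a m) (hneg : discrepancy x y (a + 1) m < 0) :
    discrepancy x y a (m + 1) = 0 := by
  have h := discrepancy_succ x y hm a
  have h' := discrepancy_succ' x y hm a
  split_ifs at h h' <;> omega

end Discrepancy

/-- a balanced cyclic interval of length `⌊L/2⌋` or `⌊L/2⌋+1`. -/
theorem exists_balanced_interval (L N : ℕ) (hL : 0 < L)
    (x y : Finset (ZMod L)) (hx : x.card = N) (hy : y.card = N) :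
    ∃ (a : ZMod L) (m : ℕ), (m = L / 2 ∨ m = L / 2 + 1) ∧
      (x ∩ cycInt L a m).card = (y ∩ cycInt L a m).card := by
  have : NeZero L := ⟨hL.ne'⟩
  have hm : L / 2 < L := Nat.div_lt_self hL one_lt_two
  suffices ∃ a m, (m = L / 2 ∨ m = L / 2 + 1) ∧ discrepancy x y a m = 0 by
    obtain ⟨a, m, hlen, h⟩ := this
    exact ⟨a, m, hlen, by simpa [discrepancy, sub_eq_zero] using h⟩
  by_cases hzero : ∃ a, discrepancy x y a (L / 2) = 0
  · obtain ⟨a, ha⟩ := hzero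
    exact ⟨a, L / 2, Or.inl rfl, ha⟩
  push Not at hzero
  obtain ⟨a, hpos, hneg⟩ :=
    ZMod.exists_pos_and_succ_neg (sum_discrepancy x y hm.le (hx.trans hy.symm)) hzero
  exact ⟨a, L / 2 + 1, Or.inr rfl, discrepancy_succ_eq_zero x y hm hpos hneg⟩

end Paper
end

section
/- The diameter of the SSEP configuration graph with N particles on L sites and hard-wall boundary conditions equals N(L−N). -/
/-!
The total position `∑ i, x i` changes by exactly one per move, so the left-packed and right-packed
configurations are at least `N (L - N)` moves apart. Conversely, some legal move always lowers the
`ℓ¹` distance `∑ i, |x i - y i|` to a target by one, and as particle `i` is confined to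
`[i + 1, L - N + 1 + i]` this distance is at most `N (L - N)`.
-/

namespace Paper

/-- A hard-wall SSEP configuration: strictly increasing positions in `{1,…,L}`. -/
def ValidHW (N L : ℕ) (x : Fin N → ℤ) : Prop :=
  StrictMono x ∧ ∀ i, 1 ≤ x i ∧ x i ≤ (L : ℤ)

/-- A hard-wall SSEP move: one particle moves by `±1`, both endpoints valid
(validity of the target enforces the exclusion rule and the walls). -/
def StepHW (N L : ℕ) (x y : Fin N → ℤ) : Prop :=
  ValidHW N L x ∧ ValidHW N L y ∧
    ∃ i, (y i = x i + 1 ∨ y i = x i - 1) ∧ ∀ j, j ≠ i → y j = x j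

/-- Diameter of the hard-wall SSEP configuration graph. -/
noncomputable def diamHW (N L : ℕ) : ℕ :=
  sSup {n | ∃ x y : Fin N → ℤ, ValidHW N L x ∧ ValidHW N L y ∧
    n = gdist (StepHW N L) x y}

namespace Reaches

variable {C : Type*} {step : C → C → Prop} {x y : C} {n : ℕ}

lemma refl (x : C) : Reaches step x x 0 :=
  ⟨fun _ => x, rfl, rfl, nofun⟩

lemma cons {x' : C} (h : step x x') (hr : Reaches step x' y n) :
    Reaches step x y (n + 1) := by
  obtain ⟨f, rfl, rfl, hf⟩ := hr
  refine ⟨fun k => if k = 0 then x else f (k - 1), rfl, by simp, ?_⟩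
  rintro (_ | k) hk
  · simpa using h
  · simpa using hf k (by omega)

lemma abs_sub_le {φ : C → ℤ} (hφ : ∀ a b, step a b → |φ b - φ a| ≤ 1)
    (h : Reaches step x y n) : |φ y - φ x| ≤ n := by
  obtain ⟨f, rfl, rfl, hf⟩ := h
  suffices ∀ k ≤ n, |φ (f k) - φ (f 0)| ≤ k from this n le_rfl
  intro k hk
  induction k with
  | zero => simp
  | succ k ih =>
    calc |φ (f (k + 1)) - φ (f 0)|
        ≤ |φ (f (k + 1)) - φ (f k)| + |φ (f k) - φ (f 0)| := abs_sub_le _ _ _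
      _ ≤ 1 + k := add_le_add (hφ _ _ (hf k hk)) (ih (by omega))
      _ = (k + 1 : ℕ) := by push_cast; ring

lemma gdist_le (h : Reaches step x y n) : gdist step x y ≤ n :=
  Nat.sInf_le h

lemma abs_sub_le_gdist {φ : C → ℤ} (hφ : ∀ a b, step a b → |φ b - φ a| ≤ 1)
    (h : Reaches step x y n) : |φ y - φ x| ≤ gdist step x y :=
  abs_sub_le hφ (Nat.sInf_mem (s := {n | Reaches step x y n}) ⟨n, h⟩)

end Reaches

lemma reaches_of_descent {C : Type*} {step : C → C → Prop} {P : C → Prop} {V : C → ℕ} {y : C}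
    (hzero : ∀ x, P x → V x = 0 → x = y)
    (hdesc : ∀ x, P x → V x ≠ 0 → ∃ x', P x' ∧ step x x' ∧ V x' + 1 = V x) :
    ∀ x, P x → Reaches step x y (V x) := by
  intro x hx
  induction hV : V x generalizing x with
  | zero => exact hzero x hx hV ▸ Reaches.refl x
  | succ n ih =>
    obtain ⟨x', hx', hstep, hV'⟩ := hdesc x hx (by omega)
    exact (ih x' hx' (by omega)).cons hstep

def l1Dist {ι : Type*} [Fintype ι] (x y : ι → ℤ) : ℕ :=
  ∑ i, (x i - y i).natAbs

section L1Dist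

variable {ι : Type*} [Fintype ι]

lemma l1Dist_eq_zero {x y : ι → ℤ} (h : l1Dist x y = 0) : x = y := by
  funext i
  have := Finset.sum_eq_zero_iff.mp h i (Finset.mem_univ i)
  omega

lemma l1Dist_update_add [DecidableEq ι] (x y : ι → ℤ) (i : ι) (a : ℤ) :
    l1Dist (Function.update x i a) y + (x i - y i).natAbs = l1Dist x y + (a - y i).natAbs := by
  unfold l1Dist
  rw [← Finset.add_sum_erase _ _ (Finset.mem_univ i),
    ← Finset.add_sum_erase _ (fun j => (x j - y j).natAbs) (Finset.mem_univ i),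
    Finset.sum_congr rfl fun j hj => by rw [Function.update_of_ne (Finset.ne_of_mem_erase hj)]]
  simp only [Function.update_self]
  ring

end L1Dist

section HardWall

variable {N L : ℕ}

lemma StrictMono.add_sub_le {f : Fin N → ℤ} (hf : StrictMono f) {i j : Fin N} (hij : i ≤ j) :
    f i + (j - i : ℤ) ≤ f j := by
  obtain ⟨d, hd⟩ : ∃ d, (j : ℕ) = i + d := ⟨j - i, by omega⟩
  induction d generalizing j with
  | zero =>
    obtain rfl : i = j := Fin.ext (by omega)
    simp
  | succ d ih =>
    have hk : (i : ℕ) + d < N := by omega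
    have h1 := ih (j := ⟨i + d, hk⟩) (by simp [Fin.le_def]) rfl
    have h2 : f ⟨i + d, hk⟩ < f j := hf (by simp [Fin.lt_def]; omega)
    simp only [hd] at h1 ⊢
    push_cast at h1 ⊢
    omega

lemma ValidHW.val_add_one_le {x : Fin N → ℤ} (hx : ValidHW N L x) (i : Fin N) :
    (i : ℤ) + 1 ≤ x i := by
  have hgap := StrictMono.add_sub_le hx.1 (show (⟨0, i.pos⟩ : Fin N) ≤ i from Nat.zero_le _)
  have hwall := (hx.2 ⟨0, i.pos⟩).1
  push_cast at hgap
  omega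

lemma ValidHW.le_sub_add_val {x : Fin N → ℤ} (hx : ValidHW N L x) (i : Fin N) :
    x i ≤ (L - N + 1 + i : ℤ) := by
  have hN : 0 < N := i.pos
  have hgap := StrictMono.add_sub_le hx.1
    (show i ≤ ⟨N - 1, by omega⟩ from Fin.le_def.2 (by dsimp only; omega))
  have hwall := (hx.2 ⟨N - 1, by omega⟩).2
  simp only [Nat.cast_sub (show 1 ≤ N by omega)] at hgap
  omega

lemma ValidHW.l1Dist_le {x y : Fin N → ℤ} (hx : ValidHW N L x) (hy : ValidHW N L y) :
    l1Dist x y ≤ N * (L - N) := by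
  calc l1Dist x y ≤ ∑ _i : Fin N, (L - N) := Finset.sum_le_sum fun i _ => by
        have := hx.val_add_one_le i; have := hx.le_sub_add_val i
        have := hy.val_add_one_le i; have := hy.le_sub_add_val i
        omega
    _ = N * (L - N) := by simp

lemma ValidHW.update {x : Fin N → ℤ} (hx : ValidHW N L x) {i : Fin N} {a : ℤ}
    (ha : 1 ≤ a ∧ a ≤ L) (hlt : ∀ j < i, x j < a) (hgt : ∀ j, i < j → a < x j) :
    ValidHW N L (Function.update x i a) := by
  refine ⟨fun j k hjk => ?_, fun j => ?_⟩ <;> simp only [Function.update_apply]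
  · split_ifs with hj hk hk
    · exact absurd (hj.trans hk.symm ▸ hjk) (lt_irrefl k)
    · exact hgt k (hj ▸ hjk)
    · exact hlt j (hk ▸ hjk)
    · exact hx.1 hjk
  · split_ifs
    exacts [ha, hx.2 j]

lemma ValidHW.stepHW_update {x : Fin N → ℤ} (hx : ValidHW N L x) {i : Fin N} {a : ℤ}
    (hx' : ValidHW N L (Function.update x i a)) (ha : a = x i + 1 ∨ a = x i - 1) :
    StepHW N L x (Function.update x i a) :=
  ⟨hx, hx', i, by simpa using ha, fun _ hj => Function.update_of_ne hj _ _⟩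

/-- Move the rightmost particle that lies left of its target one site right or, if there is none,
the leftmost particle that lies right of its target one site left: the particles it could bump
into have already passed their own targets. -/
lemma ValidHW.exists_stepHW_l1Dist {x y : Fin N → ℤ} (hx : ValidHW N L x) (hy : ValidHW N L y)
    (hne : x ≠ y) : ∃ x', ValidHW N L x' ∧ StepHW N L x x' ∧ l1Dist x' y + 1 = l1Dist x y := by
  by_cases hlag : ∃ i, x i < y i
  · obtain ⟨i, hi, hmax⟩ := (Finset.univ.filter fun i => x i < y i).exists_max_image id
      (by simpa [Finset.filter_nonempty_iff] using hlag)
    simp only [Finset.mem_filter, Finset.mem_univ, true_and, id] at hi hmax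
    have hx' : ValidHW N L (Function.update x i (x i + 1)) := by
      refine hx.update ⟨by linarith [(hx.2 i).1], by linarith [(hy.2 i).2]⟩
        (fun j hj => by linarith [hx.1 hj]) (fun j hj => ?_)
      have hyx : y j ≤ x j := not_lt.1 fun h => absurd (hmax j h) (not_le.2 hj)
      linarith [hy.1 hj]
    refine ⟨_, hx', hx.stepHW_update hx' (Or.inl rfl), ?_⟩
    have := l1Dist_update_add x y i (x i + 1)
    omega
  · push Not at hlag
    obtain ⟨i, hi, hmin⟩ := (Finset.univ.filter fun i => y i < x i).exists_min_image id (by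
      obtain ⟨i, hi⟩ := Function.ne_iff.1 hne
      exact ⟨i, by simpa using lt_of_le_of_ne (hlag i) (Ne.symm hi)⟩)
    simp only [Finset.mem_filter, Finset.mem_univ, true_and, id] at hi hmin
    have hx' : ValidHW N L (Function.update x i (x i - 1)) := by
      refine hx.update ⟨by linarith [(hy.2 i).1], by linarith [(hx.2 i).2]⟩
        (fun j hj => ?_) (fun j hj => by linarith [hx.1 hj])
      have hxy : x j ≤ y j := not_lt.1 fun h => absurd (hmin j h) (not_le.2 hj)
      linarith [hy.1 hj]
    refine ⟨_, hx', hx.stepHW_update hx' (Or.inr rfl), ?_⟩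
    have := l1Dist_update_add x y i (x i - 1)
    omega

lemma ValidHW.reaches_l1Dist {x y : Fin N → ℤ} (hx : ValidHW N L x) (hy : ValidHW N L y) :
    Reaches (StepHW N L) x y (l1Dist x y) :=
  reaches_of_descent (P := ValidHW N L) (V := (l1Dist · y)) (fun _ _ h => l1Dist_eq_zero h)
    (fun x hx hV => hx.exists_stepHW_l1Dist hy fun h => hV (h ▸ by simp [l1Dist])) x hx

lemma StepHW.abs_sum_sub_le {x y : Fin N → ℤ} (h : StepHW N L x y) :
    |∑ i, y i - ∑ i, x i| ≤ 1 := by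
  obtain ⟨-, -, i, hi, hj⟩ := h
  rw [← Finset.sum_sub_distrib, Finset.sum_eq_single i fun j _ hji => by rw [hj j hji, sub_self]]
  · rcases hi with hi | hi <;> simp [hi]
  · simp

lemma ValidHW.abs_sum_sub_le_gdist {x y : Fin N → ℤ} (hx : ValidHW N L x) (hy : ValidHW N L y) :
    |∑ i, y i - ∑ i, x i| ≤ gdist (StepHW N L) x y :=
  (hx.reaches_l1Dist hy).abs_sub_le_gdist fun _ _ h => h.abs_sum_sub_le

lemma ValidHW.gdist_le {x y : Fin N → ℤ} (hx : ValidHW N L x) (hy : ValidHW N L y) :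
    gdist (StepHW N L) x y ≤ N * (L - N) :=
  (hx.reaches_l1Dist hy).gdist_le.trans (hx.l1Dist_le hy)

def block (N : ℕ) (a : ℤ) : Fin N → ℤ := fun i => a + i

lemma validHW_block {a : ℤ} (h1 : 1 ≤ a) (hL : a + N ≤ L + 1) : ValidHW N L (block N a) :=
  ⟨fun i j hij => by simpa [block] using hij, fun i => by have := i.isLt; simp only [block]; omega⟩

lemma sum_block_sub_sum_block (a b : ℤ) : ∑ i, block N b i - ∑ i, block N a i = N * (b - a) := by
  simp [block, ← Finset.sum_sub_distrib]

lemma gdist_block_one_block (hNL : N ≤ L) :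
    gdist (StepHW N L) (block N 1) (block N (L - N + 1)) = N * (L - N) := by
  have hleft : ValidHW N L (block N 1) := validHW_block le_rfl (by omega)
  have hright : ValidHW N L (block N (L - N + 1)) := validHW_block (by omega) (by omega)
  refine le_antisymm (hleft.gdist_le hright) ?_
  have := hleft.abs_sum_sub_le_gdist hright
  rw [sum_block_sub_sum_block, add_sub_cancel_right,
    abs_of_nonneg (mul_nonneg (by positivity) (by omega))] at this
  zify [hNL]
  exact this

end HardWall

/-- the hard-wall SSEP diameter equals `N (L - N)`. -/
theorem diamHW_eq (N L : ℕ) (hNL : N ≤ L) : diamHW N L = N * (L - N) := by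
  refine IsGreatest.csSup_eq ⟨⟨_, _, ?_, ?_, (gdist_block_one_block hNL).symm⟩, ?_⟩
  · exact validHW_block le_rfl (by omega)
  · exact validHW_block (by omega) (by omega)
  · rintro _ ⟨x, y, hx, hy, rfl⟩
    exact hx.gdist_le hy

end Paper
end

section
/- In the lifted TASEP with 1 < N < L particles on a cycle of L sites, the distance from configuration A (particles at sites 1,...,N with the pointer on the particle at site 1) to configuration B (particles at sites L−N+1,...,L with the pointer on the particle at site L−1) is exactly N(L−N) + 2N − 3. -/
/-!
For the upper bound we follow an explicit schedule: the activity is passed through the initial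
jam from site `1` to site `N` (`N - 1` moves); then the particles `N, N - 1, …, 1` advance in turn
by `L - N` sites each, every run except the last ending in a pullback to the next particle; and
finally the activity is passed through the final jam from site `L - N + 1` to site `L - 1`
(`N - 2` moves).

For the lower bound, the potential `∑ x ∈ s, (-x).val` drops by at most one per move and by
`N (L - N)` from `A` to `B`, so at least `N (L - N)` moves change the occupied set. A move that
keeps the set fixed shifts the pointer by at most one site, onto the blocking particle. Hence,
before the first set-changing move, the pointer has to walk from site `1` up to site `N`. After
the last one it sits at site `L - N + 1`, and from there it has to walk to site `L - 1`: a
pullback would instead put it on the particle at site `L`, whose next move would change the set.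
-/

namespace Paper

/-- Intermediate state of a lifted-TASEP move: the active particle at `c.2`
advances deterministically if unblocked, otherwise the activity passes to the
blocking particle. -/
def Inter {L : ℕ} (c : Finset (ZMod L) × ZMod L) : Finset (ZMod L) × ZMod L :=
  if c.2 + 1 ∈ c.1 then (c.1, c.2 + 1) else (insert (c.2 + 1) (c.1.erase c.2), c.2 + 1)

/-- `r` is the particle of `s` immediately preceding position `q` (cyclically). -/
def IsPred {L : ℕ} (s : Finset (ZMod L)) (q r : ZMod L) : Prop :=
  ∃ k : ℕ, 0 < k ∧ r = q - (k : ZMod L) ∧ r ∈ s ∧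
    ∀ j : ℕ, 0 < j → j < k → q - (j : ZMod L) ∉ s

/-- A lifted-TASEP move: deterministic advance, then either a forward move
(no further action) or a pullback move (activity to the preceding particle). -/
def LStep {L : ℕ} (c d : Finset (ZMod L) × ZMod L) : Prop :=
  c.2 ∈ c.1 ∧ (d = Inter c ∨ (d.1 = (Inter c).1 ∧ IsPred (Inter c).1 (Inter c).2 d.2))

open Finset

section Reaches

variable {C : Type*} {step : C → C → Prop} {x y z : C} {m n : ℕ}

theorem reaches_zero (step : C → C → Prop) (x : C) : Reaches step x x 0 :=
  ⟨fun _ => x, rfl, rfl, by omega⟩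

theorem Reaches.single (h : step x y) : Reaches step x y 1 :=
  ⟨fun i => if i = 0 then x else y, rfl, rfl, fun i hi => by
    obtain rfl : i = 0 := by omega
    exact h⟩

theorem Reaches.trans (h₁ : Reaches step x y m) (h₂ : Reaches step y z n) :
    Reaches step x z (m + n) := by
  obtain ⟨f, rfl, rfl, hf⟩ := h₁
  obtain ⟨g, hg0, rfl, hg⟩ := h₂
  refine ⟨fun i => if i ≤ m then f i else g (i - m), by simp, ?_, fun i hi => ?_⟩
  · rcases Nat.eq_zero_or_pos n with rfl | hn
    · simp [hg0]
    · simp [show ¬ m + n ≤ m by omega]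
  · rcases Nat.lt_or_ge i m with him | him
    · simpa [him.le, show i + 1 ≤ m by omega] using hf i him
    · rcases him.eq_or_lt with rfl | him
      · simpa [hg0] using hg 0 (by omega)
      · simpa [show ¬ i ≤ m by omega, show ¬ i + 1 ≤ m by omega,
          show i + 1 - m = i - m + 1 by omega] using hg (i - m) (by omega)

theorem gdist_eq_of_reaches (h : Reaches step x y n) (hmin : ∀ m, Reaches step x y m → n ≤ m) :
    gdist step x y = n :=
  le_antisymm (Nat.sInf_le h) (le_csInf ⟨n, h⟩ hmin)

end Reaches

section Moves

variable {L : ℕ} {s : Finset (ZMod L)} {p q r : ZMod L} {c d : Finset (ZMod L) × ZMod L}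

theorem lstep_forward (hp : p ∈ s) (hp1 : p + 1 ∈ s) : LStep (s, p) (s, p + 1) :=
  ⟨hp, Or.inl (by simp [Inter, hp1])⟩

theorem lstep_advance (hp : p ∉ s) (hp1 : p + 1 ∉ insert p s) :
    LStep (insert p s, p) (insert (p + 1) s, p + 1) :=
  ⟨mem_insert_self p s, Or.inl (by rw [Inter, if_neg hp1, erase_insert hp])⟩

theorem lstep_advance_pullback (hp : p ∉ s) (hp1 : p + 1 ∉ insert p s)
    (hr : IsPred (insert (p + 1) s) (p + 1) r) :
    LStep (insert p s, p) (insert (p + 1) s, r) := by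
  refine ⟨mem_insert_self p s, Or.inr ?_⟩
  rw [Inter, if_neg hp1, erase_insert hp]
  exact ⟨rfl, hr⟩

theorem LStep.blocked_of_fst_eq (h : LStep c d) (he : d.1 = c.1) :
    c.2 + 1 ∈ c.1 ∧ (d.2 = c.2 + 1 ∨ d.2 = c.2) := by
  have hblk : c.2 + 1 ∈ c.1 := by
    by_contra hb
    have hd : d.1 = insert (c.2 + 1) (c.1.erase c.2) := by
      rcases h.2 with h2 | h2 <;> simp [h2, Inter, hb]
    exact hb (by rw [← he, hd]; exact mem_insert_self _ _)
  have hI : Inter c = (c.1, c.2 + 1) := by simp [Inter, hblk]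
  refine ⟨hblk, ?_⟩
  rcases h.2 with h2 | ⟨-, k, hk, hr, -, hgap⟩
  · left; rw [h2, hI]
  · right
    rw [hI] at hr hgap
    obtain rfl : k = 1 := by
      by_contra hk1
      exact hgap 1 one_pos (by omega) (by simpa using h.1)
    simpa using hr

theorem LStep.of_fst_ne (h : LStep c d) (hne : d.1 ≠ c.1) :
    c.2 + 1 ∉ c.1 ∧ d.1 = insert (c.2 + 1) (c.1.erase c.2) ∧
      (d.2 = c.2 + 1 ∨ IsPred d.1 (c.2 + 1) d.2) := by
  have hblk : c.2 + 1 ∉ c.1 := fun hb =>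
    hne (by rcases h.2 with h2 | h2 <;> simp [h2, Inter, hb])
  have hI : Inter c = (insert (c.2 + 1) (c.1.erase c.2), c.2 + 1) := by simp [Inter, hblk]
  rcases h.2 with h2 | ⟨h1, h2⟩
  · exact ⟨hblk, by simp [h2, hI]⟩
  · rw [hI] at h1 h2
    exact ⟨hblk, h1, Or.inr (h1 ▸ h2)⟩

theorem IsPred.add_one_notMem (h : IsPred s q r) (hq : q - 1 ∉ s) : r + 1 ∉ s := by
  obtain ⟨k, hk, rfl, hr, hgap⟩ := h
  rcases (Nat.one_le_iff_ne_zero.2 hk.ne').eq_or_lt with rfl | hk1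
  · exact fun _ => hq (by simpa using hr)
  · convert hgap (k - 1) (by omega) (by omega) using 3
    push_cast [Nat.cast_sub hk1.le]
    ring

end Moves

def JamStep {L : ℕ} (c d : Finset (ZMod L) × ZMod L) : Prop := LStep c d ∧ d.1 = c.1

theorem Reaches.jamStep_walk {L m : ℕ} {x y : Finset (ZMod L) × ZMod L}
    (h : Reaches JamStep x y m) :
    y.1 = x.1 ∧ ∃ e ≤ m, y.2 = x.2 + e ∧ ∀ j < e, x.2 + ((j + 1 : ℕ) : ZMod L) ∈ x.1 := by
  obtain ⟨f, rfl, rfl, hf⟩ := h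
  induction m with
  | zero => exact ⟨rfl, 0, le_rfl, by simp, by simp⟩
  | succ m ih =>
    obtain ⟨hs, e, he, hp, hocc⟩ := ih fun i hi => hf i (by omega)
    obtain ⟨hstep, hfix⟩ := hf m (by omega)
    obtain ⟨hblk, hmove | hstay⟩ := hstep.blocked_of_fst_eq hfix
    · refine ⟨hfix.trans hs, e + 1, by omega, by rw [hmove, hp]; push_cast; ring, fun j hj => ?_⟩
      rcases (Nat.lt_succ_iff.1 hj).eq_or_lt with rfl | hj
      · rw [hs, hp] at hblk
        convert hblk using 1
        push_cast; ring
      · exact hocc j hj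
    · exact ⟨hfix.trans hs, e, by omega, hstay.trans hp, hocc⟩

section Potential

variable {L : ℕ}

/-- The total distance of the particles to site `0`, measured in the direction of motion. -/
def potential (s : Finset (ZMod L)) : ℕ := ∑ x ∈ s, (-x).val

theorem LStep.potential_le {c d : Finset (ZMod L) × ZMod L} (h : LStep c d) :
    potential c.1 ≤ potential d.1 + 1 := by
  by_cases he : d.1 = c.1
  · rw [he]; omega
  obtain ⟨hblk, hd, -⟩ := h.of_fst_ne he
  have hval : (-c.2).val ≤ (-(c.2 + 1)).val + 1 := calc
    (-c.2).val = (-(c.2 + 1) + 1).val := by ring_nf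
    _ ≤ (-(c.2 + 1)).val + (1 : ZMod L).val := ZMod.val_add_le _ _
    _ ≤ (-(c.2 + 1)).val + 1 := by
      gcongr
      simpa using (ZMod.val_natCast L 1).trans_le (Nat.mod_le 1 L)
  have hins := sum_insert (s := c.1.erase c.2) (f := fun x : ZMod L => (-x).val)
    fun h' => hblk (mem_of_mem_erase h')
  have herase := add_sum_erase c.1 (fun x : ZMod L => (-x).val) h.1
  simp only [potential, hd] at hins herase ⊢
  omega

theorem potential_le_add_card_moves {f : ℕ → Finset (ZMod L) × ZMod L} {n : ℕ}
    (hf : ∀ i < n, LStep (f i) (f (i + 1))) :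
    potential (f 0).1 ≤ potential (f n).1 + #{i ∈ range n | (f (i + 1)).1 ≠ (f i).1} := by
  induction n with
  | zero => simp
  | succ n ih =>
    have ih := ih fun i hi => hf i (by omega)
    rw [range_add_one, filter_insert]
    split_ifs with hne
    · rw [card_insert_of_notMem (by simp)]
      have := (hf n (by omega)).potential_le
      omega
    · rwa [not_not.1 hne]

end Potential

section Sites

variable {L : ℕ} {W : Finset ℕ} {a d m p r : ℕ}

/-- Sites are numbered `1, …, L`, so site `L` is the element `0` of `ZMod L`. -/
def sites (L : ℕ) (W : Finset ℕ) : Finset (ZMod L) := W.image (↑)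

theorem natCast_injOn_Icc : Set.InjOn (Nat.cast : ℕ → ZMod L) (Set.Icc 1 L) := by
  rintro a ⟨ha1, haL⟩ b ⟨hb1, hbL⟩ hab
  have h := (ZMod.natCast_eq_natCast_iff' (a - 1) (b - 1) L).1
    (by rw [Nat.cast_sub ha1, Nat.cast_sub hb1, hab])
  rw [Nat.mod_eq_of_lt (by omega), Nat.mod_eq_of_lt (by omega)] at h
  omega

theorem natCast_mem_sites (hW : W ⊆ Icc 1 L) (hm1 : 1 ≤ m) (hmL : m ≤ L) :
    (m : ZMod L) ∈ sites L W ↔ m ∈ W := by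
  refine ⟨fun h => ?_, mem_image_of_mem _⟩
  obtain ⟨b, hb, hbm⟩ := mem_image.1 h
  have hb' := mem_Icc.1 (hW hb)
  rwa [← natCast_injOn_Icc ⟨hb'.1, hb'.2⟩ ⟨hm1, hmL⟩ hbm]

theorem sites_insert : sites L (insert a W) = insert (a : ZMod L) (sites L W) :=
  image_insert _ _ _

theorem image_range_natCast_add_eq_sites (a N : ℕ) (ha : 0 < a) :
    (range N).image (fun j => ((a + j : ℕ) : ZMod L)) = sites L (Icc a (a + N - 1)) := by
  have h : (range N).image (a + ·) = Icc a (a + N - 1) := by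
    ext m
    simp only [mem_image, mem_range, mem_Icc]
    exact ⟨fun ⟨j, hj, hjm⟩ => by omega, fun hm => ⟨m - a, by omega, by omega⟩⟩
  rw [sites, ← h, image_image]
  rfl

theorem reaches_sites_pass (hocc : ∀ m, a ≤ m → m ≤ a + d → m ∈ W) :
    Reaches LStep (sites L W, (a : ZMod L)) (sites L W, ((a + d : ℕ) : ZMod L)) d := by
  induction d with
  | zero => exact reaches_zero _ _
  | succ d ih =>
    refine (ih fun m h1 h2 => hocc m h1 (by omega)).trans (Reaches.single ?_)
    rw [← add_assoc, Nat.cast_succ]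
    exact lstep_forward (mem_image_of_mem _ (hocc _ (by omega) (by omega)))
      (by rw [← Nat.cast_succ]; exact mem_image_of_mem _ (hocc _ (by omega) (by omega)))

theorem isPred_sites (hW : W ⊆ Icc 1 L) (hr : r ∈ W) (hrp : r < p) (hpL : p ≤ L)
    (hgap : ∀ m, r < m → m < p → m ∉ W) : IsPred (sites L W) p r := by
  refine ⟨p - r, by omega, by rw [Nat.cast_sub hrp.le, sub_sub_cancel], mem_image_of_mem _ hr,
    fun j hj hjp => ?_⟩
  rw [← Nat.cast_sub (by omega), natCast_mem_sites hW (by omega) (by omega)]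
  exact hgap _ (by omega) (by omega)

theorem advance_notMem_sites (hW : W ⊆ Icc 1 L) (hp : 1 ≤ p) (hpL : p + 1 ≤ L) (hpW : p ∉ W)
    (hp1W : p + 1 ∉ W) :
    (p : ZMod L) ∉ sites L W ∧ (p : ZMod L) + 1 ∉ insert (p : ZMod L) (sites L W) := by
  have hW' : insert p W ⊆ Icc 1 L := insert_subset (mem_Icc.2 ⟨hp, by omega⟩) hW
  rw [← Nat.cast_succ, ← sites_insert, natCast_mem_sites hW hp (by omega),
    natCast_mem_sites hW' (by omega) hpL]
  simp [hpW, hp1W]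

theorem reaches_sites_run (hW : W ⊆ Icc 1 L) (ha : 1 ≤ a) (hadL : a + d ≤ L)
    (hfree : ∀ m, a ≤ m → m ≤ a + d → m ∉ W) :
    Reaches LStep (sites L (insert a W), (a : ZMod L))
      (sites L (insert (a + d) W), ((a + d : ℕ) : ZMod L)) d := by
  induction d with
  | zero => exact reaches_zero _ _
  | succ d ih =>
    refine (ih (by omega) fun m h1 h2 => hfree m h1 (by omega)).trans (Reaches.single ?_)
    obtain ⟨hp, hp1⟩ := advance_notMem_sites hW (by omega) (by omega)
      (hfree (a + d) (by omega) (by omega)) (hfree (a + d + 1) (by omega) (by omega))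
    rw [← add_assoc, sites_insert, sites_insert, Nat.cast_succ]
    exact lstep_advance hp hp1

theorem lstep_sites_advance_pullback (hW : W ⊆ Icc 1 L) (hp : 1 ≤ p) (hpL : p + 1 ≤ L)
    (hpW : p ∉ W) (hp1W : p + 1 ∉ W) (hr : r ∈ W) (hrp : r < p)
    (hgap : ∀ m, r < m → m < p → m ∉ W) :
    LStep (sites L (insert p W), (p : ZMod L)) (sites L (insert (p + 1) W), (r : ZMod L)) := by
  obtain ⟨hp', hp1'⟩ := advance_notMem_sites hW hp hpL hpW hp1W
  have hpred : IsPred (sites L (insert (p + 1) W)) ((p + 1 : ℕ) : ZMod L) r :=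
    isPred_sites (insert_subset (mem_Icc.2 ⟨by omega, hpL⟩) hW) (mem_insert_of_mem hr)
      (by omega) hpL fun m h1 h2 => by
        rw [mem_insert]
        rcases (Nat.lt_succ_iff.1 h2).eq_or_lt with rfl | h2
        · exact fun h => h.elim (by omega) hpW
        · exact fun h => h.elim (by omega) (hgap m h1 h2)
  rw [sites_insert, Nat.cast_succ] at hpred
  rw [sites_insert, sites_insert, Nat.cast_succ]
  exact lstep_advance_pullback hp' hp1' hpred

end Sites

section UpperBound

variable {N L k : ℕ}

/-- Particles `1, …, k` are still at their initial sites `1, …, k`, while particles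
`k + 1, …, N` have reached their final sites `L - N + k + 1, …, L`. -/
def stage (N L k : ℕ) : Finset ℕ := Icc 1 k ∪ Icc (L - N + k + 1) L

theorem reaches_stage_one (hN : 1 ≤ N) (hNL : N < L) :
    Reaches LStep (sites L (stage N L 1), ((1 : ℕ) : ZMod L))
      (sites L (stage N L 0), ((L - N + 1 : ℕ) : ZMod L)) (L - N) := by
  have hW : Icc (L - N + 2) L ⊆ Icc 1 L := Icc_subset_Icc (by omega) le_rfl
  have h1 : stage N L 1 = insert 1 (Icc (L - N + 2) L) := by ext; simp [stage]; omega
  have h0 : stage N L 0 = insert (1 + (L - N)) (Icc (L - N + 2) L) := by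
    ext; simp [stage]; omega
  rw [h1, h0, show L - N + 1 = 1 + (L - N) by omega]
  exact reaches_sites_run hW le_rfl (by omega) fun m _ _ => by simp; omega

theorem reaches_stage_succ (hk : 1 ≤ k) (hkN : k < N) (hNL : N < L) :
    Reaches LStep (sites L (stage N L (k + 1)), ((k + 1 : ℕ) : ZMod L))
      (sites L (stage N L k), (k : ZMod L)) (L - N) := by
  set W := Icc 1 k ∪ Icc (L - N + k + 2) L
  have hW : W ⊆ Icc 1 L := by intro m; simp [W]; omega
  have hk1 : stage N L (k + 1) = insert (k + 1) W := by ext; simp [stage, W]; omega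
  have hk0 : stage N L k = insert (k + 1 + (L - N - 1) + 1) W := by ext; simp [stage, W]; omega
  rw [hk1, hk0, show L - N = L - N - 1 + 1 by omega]
  refine (reaches_sites_run hW (by omega) (by omega) fun m _ _ => ?_).trans
    (Reaches.single (lstep_sites_advance_pullback hW (by omega) (by omega) ?_ ?_ ?_ ?_ ?_))
  all_goals first
    | omega
    | (simp [W]; omega)

theorem reaches_stage_zero (hk : 1 ≤ k) (hkN : k ≤ N) (hNL : N < L) :
    Reaches LStep (sites L (stage N L k), (k : ZMod L))
      (sites L (stage N L 0), ((L - N + 1 : ℕ) : ZMod L)) (k * (L - N)) := by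
  induction k, hk using Nat.le_induction with
  | base => simpa using reaches_stage_one (by omega) hNL
  | succ k hk ih =>
    rw [Nat.succ_mul, Nat.add_comm (k * (L - N))]
    exact (reaches_stage_succ hk hkN hNL).trans (ih (by omega))

theorem reaches_initial_final (hN : 1 < N) (hNL : N < L) :
    Reaches LStep (sites L (Icc 1 N), ((1 : ℕ) : ZMod L))
      (sites L (Icc (L - N + 1) L), ((L - 1 : ℕ) : ZMod L)) (N * (L - N) + 2 * N - 3) := by
  have hinit : stage N L N = Icc 1 N := by ext; simp [stage]; omega
  have hfinal : stage N L 0 = Icc (L - N + 1) L := by ext; simp [stage]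
  have hpass₁ := reaches_sites_pass (L := L) (W := Icc 1 N) (a := 1) (d := N - 1)
    fun m h1 h2 => mem_Icc.2 ⟨h1, by omega⟩
  have hpass₂ := reaches_sites_pass (L := L) (W := Icc (L - N + 1) L) (a := L - N + 1)
    (d := N - 2) fun m h1 h2 => mem_Icc.2 ⟨h1, by omega⟩
  have hruns := reaches_stage_zero (L := L) (by omega) le_rfl hNL
  rw [show 1 + (N - 1) = N by omega] at hpass₁
  rw [show L - N + 1 + (N - 2) = L - 1 by omega] at hpass₂
  rw [hinit, hfinal] at hruns
  have hlen : N * (L - N) + 2 * N - 3 = N - 1 + N * (L - N) + (N - 2) := by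
    generalize N * (L - N) = P; omega
  rw [hlen]
  exact (hpass₁.trans hruns).trans hpass₂

end UpperBound

section LowerBound

variable {N L : ℕ}

theorem neg_natCast_val {m : ℕ} (hm1 : 1 ≤ m) (hmL : m ≤ L) : (-(m : ZMod L)).val = L - m := by
  rw [show -(m : ZMod L) = ((L - m : ℕ) : ZMod L) by
      rw [Nat.cast_sub hmL, ZMod.natCast_self, zero_sub],
    ZMod.val_natCast, Nat.mod_eq_of_lt (by omega)]

theorem potential_sites_Icc {a b : ℕ} (ha : 1 ≤ a) (hbL : b ≤ L) :
    potential (sites L (Icc a b)) = ∑ m ∈ Icc a b, (L - m) := by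
  rw [potential, sites, sum_image (natCast_injOn_Icc.mono fun m hm => by
    simp only [coe_Icc, Set.mem_Icc] at hm ⊢; omega)]
  exact sum_congr rfl fun m hm => by rw [mem_Icc] at hm; exact neg_natCast_val (by omega) (by omega)

theorem potential_initial_eq_final_add (hNL : N ≤ L) :
    potential (sites L (Icc 1 N)) = potential (sites L (Icc (L - N + 1) L)) + N * (L - N) := by
  have hshift : Icc (L - N + 1) L = (Icc 1 N).map (addRightEmbedding (L - N)) := by
    rw [map_add_right_Icc]; congr 1 <;> omega
  rw [potential_sites_Icc le_rfl hNL, potential_sites_Icc (by omega) le_rfl, hshift, sum_map]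
  calc ∑ m ∈ Icc 1 N, (L - m) = ∑ m ∈ Icc 1 N, ((L - (m + (L - N))) + (L - N)) :=
        sum_congr rfl fun m hm => by rw [mem_Icc] at hm; omega
    _ = _ := by simp [sum_add_distrib]

theorem eq_of_mem_sites_Icc_of_sub_one_notMem {a b : ℕ} {x : ZMod L}
    (hx : x ∈ sites L (Icc a b)) (hx1 : x - 1 ∉ sites L (Icc a b)) : x = a := by
  obtain ⟨m, hm, rfl⟩ := mem_image.1 hx
  rw [mem_Icc] at hm
  rcases hm.1.eq_or_lt with rfl | ham
  · rfl
  · exact absurd (mem_image.2 ⟨m - 1, mem_Icc.2 ⟨by omega, by omega⟩, Nat.cast_pred (by omega)⟩) hx1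

theorem le_of_reaches_jamStep_initial {y : Finset (ZMod L) × ZMod L} {T : ℕ}
    (h : Reaches JamStep (sites L (Icc 1 N), ((1 : ℕ) : ZMod L)) y T) (hexit : y.2 + 1 ∉ y.1) :
    N - 1 ≤ T := by
  obtain ⟨hs, e, heT, hy, -⟩ := h.jamStep_walk
  by_contra hlt
  refine hexit ?_
  rw [hs, hy, show ((1 : ℕ) : ZMod L) + e + 1 = ((e + 2 : ℕ) : ZMod L) by push_cast; ring]
  exact mem_image_of_mem _ (mem_Icc.2 ⟨by omega, by omega⟩)

theorem le_of_lstep_of_reaches_jamStep_final (hN : 0 < N) (hNL : N < L)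
    {x y : Finset (ZMod L) × ZMod L} {m : ℕ} (hmove : LStep x y) (hne : y.1 ≠ x.1)
    (h : Reaches JamStep y (sites L (Icc (L - N + 1) L), ((L - 1 : ℕ) : ZMod L)) m) :
    N - 2 ≤ m := by
  have : Fact (1 < L) := ⟨by omega⟩
  set B := sites L (Icc (L - N + 1) L)
  obtain ⟨hs, e, hem, hy, hocc⟩ := h.jamStep_walk
  dsimp only at hs hy hocc
  obtain ⟨-, hd, hptr⟩ := hmove.of_fst_ne hne
  rw [← hs] at hd hocc
  have hq1 : x.2 + 1 ∈ B := by rw [hd]; exact mem_insert_self _ _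
  have hq : x.2 + 1 - 1 ∉ B := by
    rw [hd, add_sub_cancel_right, mem_insert, mem_erase]
    simp
  rcases hptr with hfwd | hpull
  · rw [hfwd, eq_of_mem_sites_Icc_of_sub_one_notMem hq1 hq, ← Nat.cast_add] at hy
    by_contra hlt
    have := natCast_injOn_Icc (L := L) ⟨by omega, by omega⟩ ⟨by omega, by omega⟩ hy
    omega
  · rw [← hs] at hpull
    have hr := hpull.add_one_notMem hq
    obtain rfl : e = 0 := by
      by_contra he
      exact hr (by simpa using hocc 0 (by omega))
    refine absurd ?_ hr
    rw [Nat.cast_zero, add_zero] at hy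
    rw [← hy, ← Nat.cast_add_one, Nat.sub_add_cancel (by omega)]
    exact mem_image_of_mem _ (mem_Icc.2 ⟨by omega, le_rfl⟩)

theorem le_of_reaches_initial_final (hN : 1 < N) (hNL : N < L) {n : ℕ}
    (h : Reaches LStep (sites L (Icc 1 N), ((1 : ℕ) : ZMod L))
      (sites L (Icc (L - N + 1) L), ((L - 1 : ℕ) : ZMod L)) n) :
    N * (L - N) + 2 * N - 3 ≤ n := by
  obtain ⟨f, hf0, hfn, hf⟩ := h
  have hcard : N * (L - N) ≤ #{i ∈ range n | (f (i + 1)).1 ≠ (f i).1} := by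
    have := potential_le_add_card_moves hf
    simp only [hf0, hfn, potential_initial_eq_final_add hNL.le] at this
    omega
  set moves := {i ∈ range n | (f (i + 1)).1 ≠ (f i).1}
  have hpos : 0 < N * (L - N) := Nat.mul_pos (by omega) (by omega)
  have hne : moves.Nonempty := card_pos.1 (hpos.trans_le hcard)
  have hfix : ∀ i < n, i < moves.min' hne ∨ moves.max' hne < i → (f (i + 1)).1 = (f i).1 :=
    fun i hi hout => by
      by_contra hmove
      have hmem : i ∈ moves := mem_filter.2 ⟨mem_range.2 hi, hmove⟩
      have := moves.min'_le i hmem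
      have := moves.le_max' i hmem
      omega
  have hspan : #moves ≤ moves.max' hne + 1 - moves.min' hne := by
    simpa using card_le_card fun i hi => mem_Icc.2 ⟨moves.min'_le i hi, moves.le_max' i hi⟩
  obtain ⟨hT, hTmove⟩ := mem_filter.1 (moves.min'_mem hne)
  obtain ⟨hS, hSmove⟩ := mem_filter.1 (moves.max'_mem hne)
  rw [mem_range] at hT hS
  generalize moves.min' hne = T at *
  generalize moves.max' hne = S at *
  have hpre : N - 1 ≤ T := le_of_reaches_jamStep_initial
    ⟨f, hf0, rfl, fun i hi => ⟨hf i (by omega), hfix i (by omega) (Or.inl hi)⟩⟩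
    ((hf T hT).of_fst_ne hTmove).1
  have hsuf : N - 2 ≤ n - (S + 1) := le_of_lstep_of_reaches_jamStep_final (by omega) hNL
    (hf S hS) hSmove
    ⟨fun i => f (S + 1 + i), rfl, by
      rw [← hfn]; exact congrArg f (by omega), fun i hi =>
      ⟨hf (S + 1 + i) (by omega), hfix (S + 1 + i) (by omega) (Or.inr (by omega))⟩⟩
  generalize N * (L - N) = P at *
  omega

end LowerBound

/-- the lifted-TASEP distance from `A` (particles at `1,…,N`,
pointer at site `1`) to `B` (particles at `L-N+1,…,L`, pointer at site `L-1`)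
equals `N(L-N) + 2N - 3`. -/
theorem lifted_dist_A_B (N L : ℕ) (hN : 1 < N) (hNL : N < L) :
    gdist (LStep (L := L))
        (((Finset.range N).image fun j => ((j + 1 : ℕ) : ZMod L)),
          ((1 : ℕ) : ZMod L))
        (((Finset.range N).image fun j => ((L - N + 1 + j : ℕ) : ZMod L)),
          ((L - 1 : ℕ) : ZMod L)) =
      N * (L - N) + 2 * N - 3 := by
  have hA : (range N).image (fun j => ((j + 1 : ℕ) : ZMod L)) = sites L (Icc 1 N) := by
    simpa [Nat.add_comm 1] using image_range_natCast_add_eq_sites (L := L) 1 N one_pos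
  have hB : (range N).image (fun j => ((L - N + 1 + j : ℕ) : ZMod L)) =
      sites L (Icc (L - N + 1) L) := by
    rw [image_range_natCast_add_eq_sites _ _ (by omega), show L - N + 1 + N - 1 = L by omega]
  rw [hA, hB]
  exact gdist_eq_of_reaches (reaches_initial_final hN hNL) fun n h =>
    le_of_reaches_initial_final hN hNL h

end Paper
end

section
/- The diameter of the lifted TASEP with N particles on L > N sites satisfies d ≤ 2N(L−N) + N² + C·L = N(2L−N) + O(L), for a constant C independent of N and L. -/
/-!
Particles only hop forward, and the activity moves back, to the preceding particle, only right
after a hop. Cut the circle at an empty site: on the resulting segment, march the active particle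
to the right end and pass the activity back, particle by particle, until all particles form a block
at the right end. Every march crosses only empty sites, so this takes at most `N(L-N)` moves. Run
the other way, the same marches deal a block out, front particle first, onto any configuration
whose active particle is its lowest particle or the front of the run at the left end of the block
(`Dealable`), again in at most `N(L-N)` moves. Walking backwards from a target `(t, q)` and
dragging the active particle one site back whenever the site behind it is empty, one meets a
dealable configuration after at most `L` steps, provided the walk cannot wrap around the cut; this
holds once `q + 1 ∉ t`, which a first backward walk, on the segment ending at `q`, arranges.
-/

namespace Paper

open Finset

section Reaches

variable {C : Type*} {step : C → C → Prop} {x y z : C} {m n : ℕ}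

theorem Reaches.refl_s15 (x : C) : Reaches step x x 0 :=
  ⟨fun _ => x, rfl, rfl, fun _ h => absurd h (Nat.not_lt_zero _)⟩

theorem reaches_zero_iff : Reaches step x y 0 ↔ x = y :=
  ⟨fun ⟨_, h0, hn, _⟩ => h0.symm.trans hn, fun h => h ▸ Reaches.refl_s15 x⟩

theorem reaches_succ_iff : Reaches step x z (n + 1) ↔ ∃ y, Reaches step x y n ∧ step y z := by
  constructor
  · rintro ⟨f, h0, hn, hf⟩
    exact ⟨f n, ⟨f, h0, rfl, fun i hi => hf i (by omega)⟩, hn ▸ hf n (by omega)⟩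
  · rintro ⟨y, ⟨f, h0, hn, hf⟩, hs⟩
    refine ⟨Function.update f (n + 1) z, by simp [h0], by simp, fun i hi => ?_⟩
    rcases Nat.lt_succ_iff_lt_or_eq.1 hi with hi | rfl
    · rw [Function.update_of_ne (by omega), Function.update_of_ne (by omega)]
      exact hf i hi
    · rw [Function.update_of_ne (by omega), Function.update_self, hn]
      exact hs

theorem Reaches.tail (h : Reaches step x y n) (hs : step y z) : Reaches step x z (n + 1) :=
  reaches_succ_iff.2 ⟨y, h, hs⟩

theorem Reaches.map {C' : Type*} {step' : C' → C' → Prop} (g : C → C')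
    (hg : ∀ a b, step a b → step' (g a) (g b)) (h : Reaches step x y n) :
    Reaches step' (g x) (g y) n :=
  let ⟨f, h0, hn, hf⟩ := h
  ⟨g ∘ f, by simp [h0], by simp [hn], fun i hi => hg _ _ (hf i hi)⟩

end Reaches

def move (A : Finset ℕ) (a b : ℕ) : Finset ℕ := insert b (A.erase a)

/-- The lifted TASEP on the segment `{0, …, M - 1}`: the moves of `LStep`, except that no
particle hops from `M - 1` to `0` and the activity is never passed back from `0` to `M - 1`. -/
inductive SegStep (M : ℕ) : Finset ℕ × ℕ → Finset ℕ × ℕ → Prop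
  | blocked {A : Finset ℕ} {a : ℕ} : A ⊆ range M → a ∈ A → a + 1 ∈ A →
      SegStep M (A, a) (A, a + 1)
  | forward {A : Finset ℕ} {a : ℕ} : A ⊆ range M → a ∈ A → a + 1 ∉ A → a + 1 < M →
      SegStep M (A, a) (move A a (a + 1), a + 1)
  | pullback {A : Finset ℕ} {a b : ℕ} : A ⊆ range M → a ∈ A → a + 1 ∉ A → a + 1 < M →
      b ∈ A → b < a → (∀ v, b < v → v < a → v ∉ A) → SegStep M (A, a) (move A a (a + 1), b)

section Segment

variable {M : ℕ} {A : Finset ℕ} {a b : ℕ}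

theorem move_subset (hA : A ⊆ range M) (hb : b < M) : move A a b ⊆ range M :=
  insert_subset (mem_range.2 hb) ((erase_subset _ _).trans hA)

theorem move_move {c : ℕ} (hb : b ∉ A.erase a) : move (move A a b) b c = move A a c := by
  rw [move, move, erase_insert hb, move]

theorem card_move (ha : a ∈ A) (hb : b ∉ A) : #(move A a b) = #A := by
  rw [move, card_insert_of_notMem fun h => hb (mem_of_mem_erase h), card_erase_add_one ha]

namespace SegStep

theorem undo_move (hA : A ⊆ range M) (ha : a ∉ A) (ha1 : a + 1 ∈ A) :
    SegStep M (move A (a + 1) a, a) (A, a + 1) := by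
  have hfree : a + 1 ∉ move A (a + 1) a := by simp [move]
  have := SegStep.forward (move_subset hA (by have := mem_range.1 (hA ha1); omega))
    (mem_insert_self a _) hfree (mem_range.1 (hA ha1))
  rwa [move_move (by simp [ha]), show move A (a + 1) (a + 1) = A from insert_erase ha1] at this

theorem reaches_walk (hA : A ⊆ range M) : ∀ {k : ℕ}, (∀ i ≤ k, a + i ∈ A) →
    Reaches (SegStep M) (A, a) (A, a + k) k
  | 0, _ => Reaches.refl_s15 _
  | k + 1, h => (reaches_walk hA fun i hi => h i (by omega)).tail
      (.blocked hA (h k (by omega)) (h (k + 1) le_rfl))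

theorem reaches_march (hA : A ⊆ range M) (ha : a ∈ A) (hb : b < M) (hab : a ≤ b)
    (hgap : ∀ v, a < v → v ≤ b → v ∉ A) : Reaches (SegStep M) (A, a) (move A a b, b) (b - a) := by
  induction b, hab using Nat.le_induction with
  | base => simpa [move, insert_erase ha] using Reaches.refl_s15 (step := SegStep M) (A, a)
  | succ b hab ih =>
    have hfree : b ∉ A.erase a := fun h =>
      hgap b (lt_of_le_of_ne hab (ne_of_mem_erase h).symm) b.le_succ (mem_of_mem_erase h)
    rw [Nat.sub_add_comm hab, ← move_move (c := b + 1) hfree]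
    refine (ih (by omega) fun v hv hvb => hgap v hv (by omega)).tail
      (.forward (move_subset hA (by omega)) (mem_insert_self _ _) ?_ hb)
    simp only [move, mem_insert, mem_erase, not_or]
    exact ⟨by omega, fun h => hgap (b + 1) (by omega) le_rfl h.2⟩

theorem reaches_march_pullback (hA : A ⊆ range M) (ha : a ∈ A) (hb : b < M) (hab : a < b)
    (hgap : ∀ v, a < v → v ≤ b → v ∉ A) {c : ℕ} (hc : c ∈ A) (hca : c < a)
    (hcgap : ∀ v, c < v → v < a → v ∉ A) :
    Reaches (SegStep M) (A, a) (move A a b, c) (b - a) := by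
  obtain ⟨b, rfl⟩ : ∃ b', b = b' + 1 := ⟨b - 1, by omega⟩
  have hfree : b ∉ A.erase a := fun h => (lt_or_eq_of_le (Nat.le_of_lt_succ hab)).elim
    (fun h' => hgap b h' b.le_succ (mem_of_mem_erase h)) fun h' => ne_of_mem_erase h h'.symm
  rw [Nat.sub_add_comm (by omega), ← move_move (c := b + 1) hfree]
  refine (reaches_march hA ha (by omega) (by omega) fun v hv hvb => hgap v hv (by omega)).tail
    (.pullback (move_subset hA (by omega)) (mem_insert_self _ _) ?_ (by omega)
      (mem_insert_of_mem (mem_erase.2 ⟨hca.ne, hc⟩)) (by omega) fun v hcv hvb => ?_)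
  · simp only [move, mem_insert, mem_erase, not_or]
    exact ⟨by omega, fun h => hgap (b + 1) (by omega) le_rfl h.2⟩
  · simp only [move, mem_insert, mem_erase, not_or, not_and]
    refine ⟨by omega, fun hva hv => ?_⟩
    rcases lt_or_gt_of_ne hva with h | h
    · exact hcgap v hcv h hv
    · exact hgap v h (by omega) hv

end SegStep

end Segment

section Packing

variable {M : ℕ} {A : Finset ℕ} {a c : ℕ}

theorem union_Ico_subset (hA : A ⊆ range (a + 1)) (ha : a < M) : A ∪ Ico (M - c) M ⊆ range M :=
  union_subset (hA.trans (range_subset_range.2 ha)) fun v hv => by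
    simp only [mem_Ico, mem_range] at hv ⊢; omega

theorem notMem_union_Ico (hA : A ⊆ range (a + 1)) {v : ℕ} (hav : a < v) (hv : v < M - c) :
    v ∉ A ∪ Ico (M - c) M := by
  simp only [mem_union, mem_Ico, not_or]
  exact ⟨fun h => absurd (mem_range.1 (hA h)) (by omega), by omega⟩

theorem move_union_Ico (hA : A ⊆ range (a + 1)) (h : a + c + 1 < M) :
    move (A ∪ Ico (M - c) M) a (M - c - 1) = A.erase a ∪ Ico (M - c - 1) M := by
  ext v
  have := fun hv : v ∈ A => mem_range.1 (hA hv)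
  simp only [move, mem_insert, mem_erase, mem_union, mem_Ico]
  grind

namespace SegStep

theorem reaches_union_Ico (hA : A ⊆ range (a + 1)) (ha : a ∈ A) (hM : a + c + 1 < M) {b : ℕ}
    (hb : b ∈ A.erase a) (hbmax : ∀ v ∈ A.erase a, v ≤ b) :
    Reaches (SegStep M) (A ∪ Ico (M - c) M, a) (A.erase a ∪ Ico (M - c - 1) M, b)
      (M - c - 1 - a) := by
  have hba : b < a := lt_of_le_of_ne (Nat.lt_succ_iff.1 (mem_range.1 (hA (mem_of_mem_erase hb))))
    (ne_of_mem_erase hb)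
  rw [← move_union_Ico hA hM]
  refine reaches_march_pullback (union_Ico_subset (c := c) hA (by omega)) (mem_union_left _ ha)
    (by omega) (by omega) (fun v hav hv => notMem_union_Ico hA hav (by omega))
    (mem_union_left _ (mem_of_mem_erase hb)) hba fun v hbv hva hv => ?_
  rcases mem_union.1 hv with hv | hv
  · exact absurd (hbmax v (mem_erase.2 ⟨hva.ne, hv⟩)) (by omega)
  · simp only [mem_Ico] at hv; omega

theorem reaches_Ico_of_erase_eq_empty (hA : A ⊆ range (a + 1)) (ha : a ∈ A)
    (hM : a + c + 1 < M) (h : A.erase a = ∅) :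
    Reaches (SegStep M) (A ∪ Ico (M - c) M, a) (Ico (M - c - 1) M, M - c - 1) (M - c - 1 - a) := by
  have := reaches_march (M := M) (b := M - c - 1) (union_Ico_subset (c := c) hA (by omega))
    (mem_union_left _ ha) (by omega) (by omega) fun v hav hv => notMem_union_Ico hA hav (by omega)
  rwa [move_union_Ico hA hM, h, empty_union] at this

theorem exists_reaches_Ico (ha : a ∈ A) (hA : A ⊆ range (a + 1)) (hM : a + c + 1 < M) :
    ∃ n ≤ #A * (M - c - #A),
      Reaches (SegStep M) (A ∪ Ico (M - c) M, a) (Ico (M - c - #A) M, M - c - #A) n := by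
  generalize hk : #A = k
  induction k generalizing A a c with
  | zero => exact absurd hk (card_ne_zero_of_mem ha)
  | succ k ih =>
    have hak : k ≤ a := by simpa [hk] using card_le_card hA
    rcases (A.erase a).eq_empty_or_nonempty with hA₀ | hA₀
    · obtain rfl : k = 0 := by simpa [hA₀, hk] using (card_erase_of_mem ha).symm
      exact ⟨M - c - 1 - a, by omega, reaches_Ico_of_erase_eq_empty hA ha hM hA₀⟩
    · have hb := max'_mem _ hA₀
      have hbmax := fun v hv => le_max' (A.erase a) v hv
      have hbA : A.erase a ⊆ range ((A.erase a).max' hA₀ + 1) :=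
        fun v hv => mem_range.2 (Nat.lt_succ_of_le (hbmax v hv))
      have hba := mem_range.1 (hA (mem_of_mem_erase hb))
      have hne := ne_of_mem_erase hb
      obtain ⟨n, hn, h⟩ := ih hb hbA (c := c + 1) (by omega)
        (by rw [card_erase_of_mem ha, hk]; rfl)
      rw [← Nat.sub_sub, show M - c - 1 - k = M - c - (k + 1) by omega] at h hn
      refine ⟨M - c - 1 - a + n, ?_, (reaches_union_Ico hA ha hM hb hbmax).trans h⟩
      have : M - c - 1 - a ≤ M - c - (k + 1) := by omega
      nlinarith

end SegStep

end Packing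

section Dealing

variable {M : ℕ} {Q : Finset ℕ} {j r : ℕ}

def Dealable (R : Finset ℕ) (w : ℕ) : Prop :=
  w ∈ R ∧ ((0 ∉ R ∧ ∀ v ∈ R, w ≤ v) ∨ ((∀ v ≤ w, v ∈ R) ∧ w + 1 ∉ R))

theorem card_add_le_of_forall_lt (hr : r < M) (hQ : Q ⊆ range M) (hrQ : ∀ q ∈ Q, r < q) :
    #Q + r + 1 ≤ M := by
  have := card_le_card fun q hq => mem_Ico.2 ⟨hrQ q hq, mem_range.1 (hQ hq)⟩
  simp only [Nat.card_Ico] at this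
  omega

theorem forall_erase_lt_insert {R : Finset ℕ} (hrmax : ∀ v ∈ R, v ≤ r) (hrQ : ∀ q ∈ Q, r < q) :
    ∀ x ∈ R.erase r, ∀ q ∈ insert r Q, x < q := by
  intro x hx q hq
  have hxr : x < r := lt_of_le_of_ne (hrmax x (mem_of_mem_erase hx)) (ne_of_mem_erase hx)
  rcases mem_insert.1 hq with rfl | hq
  · exact hxr
  · exact hxr.trans (hrQ q hq)

theorem notMem_range_union (hrQ : ∀ q ∈ Q, r < q) {v : ℕ} (hjv : j < v) (hvr : v ≤ r) :
    v ∉ range (j + 1) ∪ Q := by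
  simp only [mem_union, mem_range, not_or]
  exact ⟨by omega, fun h => absurd (hrQ v h) (by omega)⟩

theorem move_range_union (hjr : j < r) (hrQ : ∀ q ∈ Q, r < q) :
    move (range (j + 1) ∪ Q) j r = range j ∪ insert r Q := by
  ext v
  have := hrQ v
  simp only [move, mem_insert, mem_erase, mem_union, mem_range]
  grind

namespace SegStep

theorem reaches_deal (hQ : Q ⊆ range M) (hr : r < M) (hrQ : ∀ q ∈ Q, r < q) (hj : 0 < j)
    (hjr : j < r) :
    Reaches (SegStep M) (range (j + 1) ∪ Q, j) (range j ∪ insert r Q, j - 1) (r - j) := by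
  rw [← move_range_union hjr hrQ]
  exact reaches_march_pullback (union_subset (range_subset_range.2 (by omega)) hQ)
    (mem_union_left _ (self_mem_range_succ j)) hr hjr (fun v => notMem_range_union hrQ)
    (mem_union_left _ (mem_range.2 (by omega))) (by omega) fun v _ _ => by omega

theorem reaches_deal_last (hQ : Q ⊆ range M) (hr : r < M) (hrQ : ∀ q ∈ Q, r < q) (hr0 : 0 < r) :
    Reaches (SegStep M) (range 1 ∪ Q, 0) (insert r Q, r) r := by
  have := reaches_march (union_subset (range_subset_range.2 (by omega)) hQ)
    (mem_union_left _ (self_mem_range_succ 0)) hr hr0.le (fun v => notMem_range_union hrQ)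
  rwa [move_range_union hr0 hrQ, range_zero, empty_union, Nat.sub_zero] at this

end SegStep

theorem Dealable.eq_pred_of_range {k w : ℕ} (h : Dealable (range k ∪ Q) w) (hw : w < k) :
    w = k - 1 := by
  rcases h.2 with ⟨h0, -⟩ | ⟨-, hw1⟩
  · exact absurd (mem_union_left _ (mem_range.2 (by omega))) h0
  · by_contra hne
    exact hw1 (mem_union_left _ (mem_range.2 (by omega)))

theorem Dealable.card_eq_one {R : Finset ℕ} {w : ℕ} (h : Dealable (R ∪ Q) w)
    (hRQ : ∀ r ∈ R, ∀ q ∈ Q, r < q) (hw : w ∈ R) (hmax : ∀ v ∈ R, v ≤ w) (hR : #R ≤ w) :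
    #R = 1 := by
  rcases h.2 with ⟨-, hmin⟩ | ⟨hpre, -⟩
  · have : R ⊆ {w} := fun v hv =>
      mem_singleton.2 (le_antisymm (hmax v hv) (hmin v (mem_union_left _ hv)))
    exact le_antisymm (card_singleton w ▸ card_le_card this) (card_pos.2 ⟨w, hw⟩)
  · have : range (w + 1) ⊆ R := fun v hv => by
      rcases mem_union.1 (hpre v (Nat.lt_succ_iff.1 (mem_range.1 hv))) with h | h
      · exact h
      · exact absurd (hRQ w hw v h) (by simp only [mem_range] at hv; omega)
    have := card_le_card this
    simp only [card_range] at this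
    omega

theorem Dealable.exists_reaches {R : Finset ℕ} {w : ℕ} (h : Dealable (R ∪ Q) w)
    (hR : R ⊆ range M) (hQ : Q ⊆ range M) (hRQ : ∀ r ∈ R, ∀ q ∈ Q, r < q) (hw : w ∈ R) :
    ∃ n ≤ #R * (M - #R - #Q), Reaches (SegStep M) (range #R ∪ Q, #R - 1) (R ∪ Q, w) n := by
  generalize hj : #R = j
  induction j generalizing Q R with
  | zero => exact absurd hj (card_ne_zero_of_mem hw)
  | succ j ih =>
    obtain ⟨r, hrR, hrmax⟩ := R.exists_max_image id ⟨w, hw⟩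
    have hrM : r < M := mem_range.1 (hR hrR)
    have hrQ : ∀ q ∈ Q, r < q := hRQ r hrR
    have hQr := card_add_le_of_forall_lt hrM hQ hrQ
    by_cases hrj : r ≤ j
    · obtain rfl : R = range (j + 1) := eq_of_subset_of_card_le
        (fun v hv => mem_range.2 (Nat.lt_succ_of_le ((hrmax v hv).trans hrj)))
        (by rw [card_range, hj])
      obtain rfl := h.eq_pred_of_range (mem_range.1 hw)
      exact ⟨0, by omega, Reaches.refl_s15 _⟩
    rcases Nat.eq_zero_or_pos j with rfl | hj0
    · obtain ⟨x, rfl⟩ := Finset.card_eq_one.1 hj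
      rw [mem_singleton] at hw hrR
      subst hw hrR
      exact ⟨r, by simp; omega, by simpa using SegStep.reaches_deal_last hQ hrM hrQ (by omega)⟩
    · have hwr : w ≠ r := fun hwr =>
        absurd (h.card_eq_one hRQ hw (hwr ▸ hrmax) (by omega)) (by omega)
      have hunion : R.erase r ∪ insert r Q = R ∪ Q := by
        rw [union_insert, ← insert_union, insert_erase hrR]
      obtain ⟨n, hn, h₂⟩ := ih (hunion ▸ h) ((erase_subset _ _).trans hR)
        (insert_subset (hR hrR) hQ) (forall_erase_lt_insert hrmax hrQ) (mem_erase.2 ⟨hwr, hw⟩)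
        (by rw [card_erase_of_mem hrR, hj]; rfl)
      rw [hunion] at h₂
      rw [card_insert_of_notMem fun hr => lt_irrefl r (hrQ r hr),
        show M - j - (#Q + 1) = M - (j + 1) - #Q by omega] at hn
      refine ⟨r - j + n, ?_, (SegStep.reaches_deal hQ hrM hrQ hj0 (by omega)).trans h₂⟩
      have : r - j ≤ M - (j + 1) - #Q := by omega
      nlinarith

end Dealing

section Sweeps

variable {M : ℕ} {A : Finset ℕ}

namespace SegStep

theorem exists_reaches_forward {a k : ℕ} (hA : A ⊆ range (k + 1)) (ha : a ∈ A) (hk : k < M) :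
    ∀ i, a + i ≤ k → ∃ A', #A' = #A ∧ A' ⊆ range (k + 1) ∧ a + i ∈ A' ∧
      Reaches (SegStep M) (A, a) (A', a + i) i
  | 0, _ => ⟨A, rfl, hA, ha, Reaches.refl_s15 _⟩
  | i + 1, hi => by
    obtain ⟨A', hcard, hA', hmem, h⟩ := exists_reaches_forward hA ha hk i (by omega)
    have hA'M : A' ⊆ range M := hA'.trans (range_subset_range.2 (by omega))
    by_cases hnext : a + i + 1 ∈ A'
    · exact ⟨A', hcard, hA', hnext, h.tail (.blocked hA'M hmem hnext)⟩
    · refine ⟨move A' (a + i) (a + i + 1), (card_move hmem hnext).trans hcard,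
        move_subset hA' (by omega), mem_insert_self _ _,
        h.tail (.forward hA'M hmem hnext (by omega))⟩

theorem exists_dealable_reaches {u : ℕ} (hA : A ⊆ range M) (hu : u ∈ A)
    (hu1 : u + 1 ∈ A → ∃ v < u, v ∉ A) : ∃ R w, #R = #A ∧ R ⊆ range M ∧ Dealable R w ∧
      ∃ n ≤ u, Reaches (SegStep M) (R, w) (A, u) n := by
  induction u generalizing A with
  | zero =>
    have hpre : ∀ v ≤ 0, v ∈ A := fun v hv => by rwa [Nat.le_zero.1 hv]
    have h1 : 1 ∉ A := fun h => by obtain ⟨v, hv, -⟩ := hu1 h; omega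
    exact ⟨A, 0, rfl, hA, ⟨hu, .inr ⟨hpre, h1⟩⟩, 0, le_rfl, Reaches.refl_s15 _⟩
  | succ k ih =>
    by_cases hdeal : Dealable A (k + 1)
    · exact ⟨A, k + 1, rfl, hA, hdeal, 0, by omega, Reaches.refl_s15 _⟩
    by_cases hk : k ∈ A
    · obtain ⟨v, hv, hvA⟩ : ∃ v < k + 1, v ∉ A := by
        by_contra! hall
        have hpre : ∀ v ≤ k + 1, v ∈ A := fun v hv =>
          (Nat.lt_or_eq_of_le hv).elim (hall v) (· ▸ hu)
        obtain ⟨v, hv, hvA⟩ := hu1 (by_contra fun h => hdeal ⟨hu, .inr ⟨hpre, h⟩⟩)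
        exact hvA (hall v hv)
      obtain ⟨R, w, hcard, hR, hw, n, hn, h⟩ :=
        ih hA hk fun _ => ⟨v, lt_of_le_of_ne (by omega) fun h => hvA (h ▸ hk), hvA⟩
      exact ⟨R, w, hcard, hR, hw, n + 1, by omega, h.tail (.blocked hA hk hu)⟩
    · have hk1 : k + 1 ∉ move A (k + 1) k := by simp [move]
      obtain ⟨R, w, hcard, hR, hw, n, hn, h⟩ :=
        ih (move_subset hA (by have := mem_range.1 (hA hu); omega)) (mem_insert_self _ _)
          (fun h => absurd h hk1)
      exact ⟨R, w, hcard.trans (card_move hu hk), hR, hw, n + 1, by omega,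
        h.tail (.undo_move hA hk hu)⟩

theorem exists_front_reaches (hA : A ⊆ range M) : ∀ {u : ℕ}, u ∈ A → (∃ v < u, v ∉ A) →
    ∃ R w, #R = #A ∧ R ⊆ range M ∧ w ∈ R ∧ w + 1 ∉ R ∧ w < u ∧
      ∃ n ≤ u, Reaches (SegStep M) (R, w) (A, u) n
  | 0, _, ⟨v, hv, _⟩ => absurd hv (Nat.not_lt_zero v)
  | k + 1, hu, ⟨v, hv, hvA⟩ => by
    by_cases hk : k ∈ A
    · obtain ⟨R, w, hcard, hR, hw, hw1, hwk, n, hn, h⟩ := exists_front_reaches hA hk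
        ⟨v, lt_of_le_of_ne (by omega) fun h => hvA (h ▸ hk), hvA⟩
      exact ⟨R, w, hcard, hR, hw, hw1, by omega, n + 1, by omega, h.tail (.blocked hA hk hu)⟩
    · exact ⟨move A (k + 1) k, k, card_move hu hk,
        move_subset hA (by have := mem_range.1 (hA hu); omega), mem_insert_self _ _,
        by simp [move], by omega, 1, by omega, Reaches.single (.undo_move hA hk hu)⟩

end SegStep

end Sweeps

section Circle

variable {L : ℕ}

def place (ρ : ZMod L) (A : Finset ℕ) : Finset (ZMod L) := A.image fun a : ℕ => ρ + (a : ZMod L)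

def toCircle (ρ : ZMod L) (c : Finset ℕ × ℕ) : Finset (ZMod L) × ZMod L :=
  (place ρ c.1, ρ + c.2)

theorem add_natCast_succ (ρ : ZMod L) (a : ℕ) : ρ + ((a + 1 : ℕ) : ZMod L) = ρ + a + 1 := by
  push_cast; ring

theorem inter_toCircle_of_mem {ρ : ZMod L} {A : Finset ℕ} {a : ℕ} (ha : a + 1 ∈ A) :
    Inter (toCircle ρ (A, a)) = toCircle ρ (A, a + 1) := by
  have : ρ + ((a + 1 : ℕ) : ZMod L) ∈ place ρ A := mem_image_of_mem _ ha
  simp only [Inter, toCircle, ← add_natCast_succ, this, ↓reduceIte]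

theorem card_place {ρ : ZMod L} {A : Finset ℕ} (hA : A ⊆ range L) : #(place ρ A) = #A :=
  card_image_of_injOn fun a ha b hb h => by
    simpa [ZMod.val_natCast_of_lt (mem_range.1 (hA ha)),
      ZMod.val_natCast_of_lt (mem_range.1 (hA hb))] using congrArg (fun z => (z - ρ).val) h

theorem toCircle_Ico {ρ : ZMod L} {N : ℕ} (hN : N ≤ L) :
    toCircle ρ (Ico (L - N) L, L - N) = toCircle (ρ + ((L - N : ℕ) : ZMod L)) (range N, 0) := by
  simp only [toCircle, place, Nat.cast_zero, add_zero, Prod.mk.injEq, and_true]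
  ext z
  simp only [mem_image, mem_Ico, mem_range]
  constructor
  · rintro ⟨a, ha, rfl⟩
    exact ⟨a - (L - N), by omega, by rw [add_assoc, ← Nat.cast_add, Nat.add_sub_cancel' ha.1]⟩
  · rintro ⟨a, ha, rfl⟩
    exact ⟨L - N + a, by omega, by rw [Nat.cast_add, add_assoc]⟩

variable [NeZero L] {ρ z : ZMod L} {A : Finset ℕ} {a k : ℕ}

theorem eq_add_natCast_iff (hk : k < L) : z = ρ + k ↔ (z - ρ).val = k := by
  rw [← sub_eq_iff_eq_add']
  exact ⟨fun h => h ▸ ZMod.val_natCast_of_lt hk, fun h => h ▸ (ZMod.natCast_zmod_val _).symm⟩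

theorem mem_place_iff (hA : A ⊆ range L) : z ∈ place ρ A ↔ (z - ρ).val ∈ A := by
  simp only [place, mem_image]
  constructor
  · rintro ⟨a, ha, rfl⟩
    rwa [(eq_add_natCast_iff (mem_range.1 (hA ha))).1 rfl]
  · exact fun h => ⟨_, h, by rw [ZMod.natCast_zmod_val, add_sub_cancel]⟩

theorem add_natCast_mem_place (hA : A ⊆ range L) (hk : k < L) :
    ρ + (k : ZMod L) ∈ place ρ A ↔ k ∈ A := by
  rw [mem_place_iff hA, (eq_add_natCast_iff hk).1 rfl]

theorem place_move {b : ℕ} (hA : A ⊆ range L) (ha : a < L) (hb : b < L) :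
    place ρ (move A a b) = insert (ρ + b) ((place ρ A).erase (ρ + a)) := by
  ext z
  rw [mem_place_iff (move_subset hA hb), mem_insert, mem_erase, mem_place_iff hA, ne_eq,
    eq_add_natCast_iff ha, eq_add_natCast_iff hb]
  simp only [move, mem_insert, mem_erase]

theorem inter_toCircle_of_notMem (hA : A ⊆ range L) (ha : a + 1 ∉ A) (haL : a + 1 < L) :
    Inter (toCircle ρ (A, a)) = toCircle ρ (move A a (a + 1), a + 1) := by
  have : ρ + ((a + 1 : ℕ) : ZMod L) ∉ place ρ A := by rwa [add_natCast_mem_place hA haL]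
  simp only [Inter, toCircle, ← add_natCast_succ, this, ↓reduceIte]
  rw [place_move hA (by omega) haL]

theorem SegStep.lStep {c d : Finset ℕ × ℕ} (h : SegStep L c d) :
    LStep (toCircle ρ c) (toCircle ρ d) := by
  rcases h with @⟨A, a, hA, ha, ha1⟩ | @⟨A, a, hA, ha, ha1, haL⟩ |
      @⟨A, a, b, hA, ha, ha1, haL, hb, hba, hgap⟩ <;>
    refine ⟨mem_image_of_mem _ ha, ?_⟩
  · exact Or.inl (inter_toCircle_of_mem ha1).symm
  · exact Or.inl (inter_toCircle_of_notMem hA ha1 haL).symm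
  rw [inter_toCircle_of_notMem hA ha1 haL]
  refine Or.inr ⟨rfl, a + 1 - b, by omega, ?_, ?_, fun j hj0 hjk => ?_⟩
  · simp only [toCircle]
    rw [Nat.cast_sub (by omega)]
    ring
  · exact mem_image_of_mem _ (mem_insert_of_mem (mem_erase.2 ⟨by omega, hb⟩))
  · have : ρ + ((a + 1 : ℕ) : ZMod L) - j = ρ + ((a + 1 - j : ℕ) : ZMod L) := by
      rw [Nat.cast_sub (by omega)]; ring
    simp only [toCircle]
    rw [this, add_natCast_mem_place (move_subset hA haL) (by omega)]
    simp only [move, mem_insert, mem_erase, not_or, not_and]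
    exact ⟨by omega, fun hne => hgap _ (by omega) (by omega)⟩

theorem Reaches.toCircle {c d : Finset ℕ × ℕ} {n : ℕ} (h : Reaches (SegStep L) c d n) :
    Reaches LStep (toCircle ρ c) (toCircle ρ d) n :=
  h.map _ fun _ _ => SegStep.lStep

end Circle

section Stages

variable {L : ℕ} [NeZero L]

def offsets (ρ : ZMod L) (s : Finset (ZMod L)) : Finset ℕ := s.image fun z => (z - ρ).val

variable {ρ q : ZMod L} {s : Finset (ZMod L)} {N : ℕ}

theorem offsets_subset : offsets ρ s ⊆ range L := fun _ hv => by
  obtain ⟨z, -, rfl⟩ := mem_image.1 hv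
  exact mem_range.2 (ZMod.val_lt _)

theorem mem_offsets {v : ℕ} (hv : v < L) : v ∈ offsets ρ s ↔ ρ + v ∈ s := by
  simp only [offsets, mem_image]
  refine ⟨fun ⟨z, hz, hzv⟩ => (eq_add_natCast_iff hv).2 hzv ▸ hz, fun h => ⟨_, h, ?_⟩⟩
  exact ((eq_add_natCast_iff hv).1 rfl)

theorem card_offsets : #(offsets ρ s) = #s :=
  card_image_of_injOn fun z _ w _ h => by simpa using congrArg (fun v : ℕ => ρ + (v : ZMod L)) h

theorem toCircle_offsets (p : ZMod L) : toCircle ρ (offsets ρ s, (p - ρ).val) = (s, p) := by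
  simp [toCircle, place, offsets, image_image, Function.comp_def]

theorem add_one_add_natCast_pred (z : ZMod L) : z + 1 + ((L - 1 : ℕ) : ZMod L) = z := by
  rw [Nat.cast_sub NeZero.one_le, ZMod.natCast_self]; ring

theorem exists_reaches_packed {p : ZMod L} (hs : #s = N) (hNL : N < L) (hp : p ∈ s) :
    ∃ ρ, ∃ n ≤ N * (L - N) + L, Reaches LStep (s, p) (toCircle ρ (range N, 0)) n := by
  obtain ⟨z, -, hz⟩ := exists_mem_notMem_of_card_lt_card (s := s) (t := univ)
    (by rwa [card_univ, ZMod.card, hs])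
  have hN : 1 ≤ N := hs ▸ card_pos.2 ⟨p, hp⟩
  have hA : offsets (z + 1) s ⊆ range (L - 2 + 1) := fun v hv => by
    have hvL := mem_range.1 (offsets_subset hv)
    have : v ≠ L - 1 := by
      rintro rfl; exact hz (add_one_add_natCast_pred z ▸ (mem_offsets hvL).1 hv)
    exact mem_range.2 (by omega)
  have hp' : (p - (z + 1)).val ∈ offsets (z + 1) s := mem_image_of_mem _ hp
  have ha := mem_range.1 (hA hp')
  obtain ⟨A, hcard, hA', hmem, h₁⟩ := SegStep.exists_reaches_forward hA hp' (M := L) (by omega)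
    (L - 2 - (p - (z + 1)).val) (by omega)
  rw [show (p - (z + 1)).val + (L - 2 - (p - (z + 1)).val) = L - 2 by omega] at hmem h₁
  obtain ⟨n, hn, h₂⟩ := SegStep.exists_reaches_Ico hmem hA' (M := L) (c := 0) (by omega)
  simp only [Nat.sub_zero, Ico_self, union_empty, hcard, card_offsets, hs] at hn h₂
  have h := (h₁.trans h₂).toCircle (ρ := z + 1)
  rw [toCircle_offsets, toCircle_Ico hNL.le] at h
  exact ⟨_, _, by omega, h⟩

theorem exists_front_reaches {t : Finset (ZMod L)} (ht : #t = N) (hNL : N < L)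
    (hq : q ∈ t) : ∃ t₁ q₁, #t₁ = N ∧ q₁ ∈ t₁ ∧ q₁ + 1 ∉ t₁ ∧
      ∃ n ≤ L, Reaches LStep (t₁, q₁) (t, q) n := by
  have hu : (q - (q + 1)).val = L - 1 :=
    (eq_add_natCast_iff (by omega)).1 (add_one_add_natCast_pred q).symm
  obtain ⟨v, hv, hvt⟩ := exists_mem_notMem_of_card_lt_card (s := offsets (q + 1) t) (t := range L)
    (by rw [card_offsets, card_range, ht]; exact hNL)
  have hvu : v < (q - (q + 1)).val := by
    have : v ≠ L - 1 := by rintro rfl; exact hvt (hu ▸ mem_image_of_mem _ hq)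
    have := mem_range.1 hv
    omega
  obtain ⟨R, w, hcard, hR, hw, hw1, hwu, n, hn, h⟩ :=
    SegStep.exists_front_reaches offsets_subset (mem_image_of_mem _ hq) ⟨v, hvu, hvt⟩
  have h' := h.toCircle (ρ := q + 1)
  rw [toCircle_offsets] at h'
  refine ⟨place (q + 1) R, q + 1 + w, by rw [card_place hR, hcard, card_offsets, ht],
    mem_image_of_mem _ hw, ?_, n, by omega, h'⟩
  rw [← add_natCast_succ, add_natCast_mem_place hR (by omega)]
  exact hw1

theorem exists_reaches_of_packed {t : Finset (ZMod L)} (ht : #t = N) (hNL : N < L) (hq : q ∈ t)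
    (hq1 : q + 1 ∉ t) (ρ : ZMod L) :
    ∃ n ≤ N * (L - N) + 2 * L, Reaches LStep (toCircle ρ (range N, 0)) (t, q) n := by
  have hu1 : (q - ρ).val + 1 ∉ offsets ρ t := fun h => by
    have hlt := mem_range.1 (offsets_subset h)
    rw [mem_offsets hlt, add_natCast_succ, ZMod.natCast_zmod_val, add_sub_cancel] at h
    exact hq1 h
  obtain ⟨R, w, hcard, hR, hdeal, n₃, hn₃, h₃⟩ :=
    SegStep.exists_dealable_reaches offsets_subset (mem_image_of_mem _ hq) fun h => absurd h hu1
  rw [card_offsets, ht] at hcard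
  have hN : 1 ≤ N := ht ▸ card_pos.2 ⟨q, hq⟩
  have h₁ := SegStep.reaches_walk (M := L) (A := range N) (a := 0) (k := N - 1)
    (range_subset_range.2 hNL.le) fun i hi => mem_range.2 (by omega)
  rw [zero_add] at h₁
  obtain ⟨n₂, hn₂, h₂⟩ := Dealable.exists_reaches (Q := ∅) (by simpa using hdeal) hR
    (empty_subset _) (by simp) hdeal.1
  simp only [union_empty, hcard, card_empty, Nat.sub_zero] at hn₂ h₂
  have h := ((h₁.trans h₂).trans h₃).toCircle (ρ := ρ)
  rw [toCircle_offsets] at h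
  have := (q - ρ).val_lt
  exact ⟨_, by omega, h⟩

end Stages

/-- the lifted-TASEP diameter is at most
`2N(L-N) + N² + C·L = N(2L-N) + O(L)` for a constant `C` independent of `N`
and `L`. -/
theorem lifted_diameter_upper_bound :
    ∃ C : ℕ, ∀ N L : ℕ, N < L →
      ∀ x y : Finset (ZMod L) × ZMod L,
        x.1.card = N → x.2 ∈ x.1 → y.1.card = N → y.2 ∈ y.1 →
        ∃ n : ℕ, Reaches (LStep (L := L)) x y n ∧
          n ≤ 2 * N * (L - N) + N ^ 2 + C * L := by
  refine ⟨4, fun N L hNL x y hx hxp hy hyp => ?_⟩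
  have : NeZero L := ⟨by omega⟩
  obtain ⟨ρ, n₁, hn₁, h₁⟩ := exists_reaches_packed hx hNL hxp
  obtain ⟨t, q, ht, hq, hq1, n₃, hn₃, h₃⟩ := exists_front_reaches hy hNL hyp
  obtain ⟨n₂, hn₂, h₂⟩ := exists_reaches_of_packed ht hNL hq hq1 ρ
  exact ⟨n₁ + n₂ + n₃, (h₁.trans h₂).trans h₃, by nlinarith⟩

end Paper
end
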